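/- arXiv:1704.02460 — 4 statements merged into one kernel-verified Lean document; each statement's English description precedes it below -/
import Mathlib

section
/- Let (g, π, U, 𝔘, B) be a standard pentad over ℂ with Φ-map Φ. Then Φ is g-equivariant: for all b ∈ g, v ∈ U and φ ∈ 𝔘 one has Φ(π(b)v, φ) + Φ(v, b·φ) = ⁅b, Φ(v, φ)⁆, where (b·φ)(w) = −φ(π(b)w) is the dual action of g on 𝔘. -/
/-! Since `B` is nondegenerate, it suffices to compare `B a` of both sides for every `a`.
By the defining property of `Φ` and the dual action, the left side gives
`P (π a (π b v)) φ - P (π b (π a v)) φ`; invariance of `B` turns `B a ⁅b, Φ v φ⁆` into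
`B ⁅a, b⁆ (Φ v φ) = P (π ⁅a, b⁆ v) φ`, the same number. -/

attribute [local instance 100] LieRing.ofAssociativeRing

section

variable {R g U W : Type*} [CommRing R] [LieRing g] [LieAlgebra R g]
  [AddCommGroup U] [Module R U] [AddCommGroup W] [Module R W]

theorem eq_of_forall_bilin_apply_eq (B : g →ₗ[R] g →ₗ[R] R)
    (hBsymm : ∀ x y : g, B x y = B y x) (hBnd : ∀ x : g, (∀ z : g, B x z = 0) → x = 0)
    {x y : g} (h : ∀ a : g, B a x = B a y) : x = y :=
  sub_eq_zero.mp <| hBnd _ fun z => by rw [hBsymm, map_sub, h, sub_self]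

theorem bilin_apply_lie_phiMap (π : g →ₗ⁅R⁆ Module.End R U) (P : U →ₗ[R] W →ₗ[R] R)
    (B : g →ₗ[R] g →ₗ[R] R) (hBinv : ∀ x y z : g, B ⁅x, y⁆ z = B x ⁅y, z⁆)
    (Φ : U →ₗ[R] W →ₗ[R] g) (hΦ : ∀ (a : g) (v : U) (φ : W), B a (Φ v φ) = P (π a v) φ)
    (a b : g) (v : U) (φ : W) :
    B a ⁅b, Φ v φ⁆ = P (π a (π b v)) φ - P (π b (π a v)) φ := by
  rw [← hBinv, hΦ, π.map_lie, Ring.lie_def, LinearMap.sub_apply, map_sub, LinearMap.sub_apply,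
    Module.End.mul_apply, Module.End.mul_apply]

end

theorem phiMap_equivariant_general
    {g U W : Type*} [LieRing g] [LieAlgebra ℂ g]
    [AddCommGroup U] [Module ℂ U] [AddCommGroup W] [Module ℂ W]
    (π : g →ₗ⁅ℂ⁆ Module.End ℂ U) (σ : g →ₗ⁅ℂ⁆ Module.End ℂ W)
    (P : U →ₗ[ℂ] W →ₗ[ℂ] ℂ)
    (hσ : ∀ (a : g) (v : U) (φ : W), P v (σ a φ) = - P (π a v) φ)
    (B : g →ₗ[ℂ] g →ₗ[ℂ] ℂ)
    (hBsymm : ∀ x y : g, B x y = B y x)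
    (hBinv : ∀ x y z : g, B ⁅x, y⁆ z = B x ⁅y, z⁆)
    (hBnd : ∀ x : g, (∀ z : g, B x z = 0) → x = 0)
    (Φ : U →ₗ[ℂ] W →ₗ[ℂ] g)
    (hΦ : ∀ (a : g) (v : U) (φ : W), B a (Φ v φ) = P (π a v) φ) :
    ∀ (b : g) (v : U) (φ : W),
      Φ (π b v) φ + Φ v (σ b φ) = ⁅b, Φ v φ⁆ := by
  intro b v φ
  refine eq_of_forall_bilin_apply_eq B hBsymm hBnd fun a => ?_
  rw [map_add, hΦ, hΦ, hσ, bilin_apply_lie_phiMap π P B hBinv Φ hΦ]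
  ring

/-- Let `(g, π, U, 𝔘, B)` be a standard pentad over `ℂ` with `Φ`-map `Φ`.
Here the `g`-submodule `𝔘 ⊆ Hom(U, ℂ)` is encoded abstractly as a `ℂ`-vector space `W`
with a `g`-action `σ`, together with the canonical pairing `P : U × W → ℂ` (i.e.
`P v φ = φ(v)`), nondegenerate in both slots; the hypothesis `hσ` says that `σ` is the
dual action `(a·φ)(w) = -φ(π(a)w)`.  Then the `Φ`-map is `g`-equivariant:
`Φ(π(b)v, φ) + Φ(v, b·φ) = ⁅b, Φ(v, φ)⁆`. -/
theorem phiMap_equivariant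
    {g U W : Type*} [LieRing g] [LieAlgebra ℂ g]
    [AddCommGroup U] [Module ℂ U] [AddCommGroup W] [Module ℂ W]
    (π : g →ₗ⁅ℂ⁆ Module.End ℂ U) (σ : g →ₗ⁅ℂ⁆ Module.End ℂ W)
    (P : U →ₗ[ℂ] W →ₗ[ℂ] ℂ)
    (hP₁ : ∀ v : U, (∀ φ : W, P v φ = 0) → v = 0)
    (hP₂ : ∀ φ : W, (∀ v : U, P v φ = 0) → φ = 0)
    (hσ : ∀ (a : g) (v : U) (φ : W), P v (σ a φ) = - P (π a v) φ)
    (B : g →ₗ[ℂ] g →ₗ[ℂ] ℂ)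
    (hBsymm : ∀ x y : g, B x y = B y x)
    (hBinv : ∀ x y z : g, B ⁅x, y⁆ z = B x ⁅y, z⁆)
    (hBnd : ∀ x : g, (∀ z : g, B x z = 0) → x = 0)
    (Φ : U →ₗ[ℂ] W →ₗ[ℂ] g)
    (hΦ : ∀ (a : g) (v : U) (φ : W), B a (Φ v φ) = P (π a v) φ) :
    ∀ (b : g) (v : U) (φ : W),
      Φ (π b v) φ + Φ v (σ b φ) = ⁅b, Φ v φ⁆ :=
  phiMap_equivariant_general π σ P hσ B hBsymm hBinv hBnd Φ hΦ
end

section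
/- Let L be a Lie algebra over ℂ with a ℤ-grading by subspaces (L_n)_{n ∈ ℤ} (L is the internal direct sum of the L_n and ⁅L_i, L_j⁆ ⊆ L_{i+j}), and assume the grading is transitive: for every n ≥ 1 and x ∈ L_n, if ⁅x, y⁆ = 0 for all y ∈ L₋₁ then x = 0, and for every n ≤ −1 and x ∈ L_n, if ⁅x, y⁆ = 0 for all y ∈ L₁ then x = 0. Then every graded ideal J of L (i.e., an ideal equal to the sum of its components J ∩ L_n) satisfying J ∩ (L₋₁ ⊕ L₀ ⊕ L₁) = {0} is the zero ideal; in other words, L is minimal in Kac's sense. -/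
/-! A Lie ideal is stable under bracketing with `L₋₁`, which lowers degrees by one, and by
transitivity a nonzero element of positive degree has a nonzero bracket with `L₋₁`. So a nonzero
element of `J` in degree `n ≥ 2` would give one in degree `n - 1`, and descending to degree `1`
contradicts `J ∩ L₁ = 0`. Symmetrically for negative degrees; being graded, `J` then vanishes. -/

namespace LieIdeal

variable {R L : Type*} [CommRing R] [LieRing L] [LieAlgebra R L] (J : LieIdeal R L)

theorem inf_eq_bot_of_inf_eq_bot_of_lie_mem {A B C : Submodule R L}
    (hlie : ∀ x ∈ A, ∀ y ∈ C, ⁅x, y⁆ ∈ B)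
    (hfaithful : ∀ x ∈ A, (∀ y ∈ C, ⁅x, y⁆ = 0) → x = 0)
    (hB : (J : Submodule R L) ⊓ B = ⊥) :
    (J : Submodule R L) ⊓ A = ⊥ := by
  refine eq_bot_iff.mpr fun x ⟨hxJ, hxA⟩ ↦ hfaithful x hxA fun y hy ↦ ?_
  have hxy : ⁅x, y⁆ ∈ (J : Submodule R L) ⊓ B := ⟨lie_mem_left R L J x y hxJ, hlie x hxA y hy⟩
  rwa [hB, Submodule.mem_bot] at hxy

variable {grading : ℤ → Submodule R L}
  (bracket_grading : ∀ (i j : ℤ) (x y : L),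
    x ∈ grading i → y ∈ grading j → ⁅x, y⁆ ∈ grading (i + j))
include bracket_grading

theorem inf_grading_eq_bot_of_one_le
    (htrans_pos : ∀ n : ℤ, 1 ≤ n → ∀ x ∈ grading n,
      (∀ y ∈ grading (-1), ⁅x, y⁆ = 0) → x = 0)
    (h_one : (J : Submodule R L) ⊓ grading 1 = ⊥) :
    ∀ n, 1 ≤ n → (J : Submodule R L) ⊓ grading n = ⊥ :=
  Int.leInduction h_one fun n hn ih ↦
    J.inf_eq_bot_of_inf_eq_bot_of_lie_mem
      (fun x hx y hy ↦ by simpa using bracket_grading _ _ x y hx hy)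
      (htrans_pos (n + 1) (by omega)) ih

theorem inf_grading_eq_bot_of_le_neg_one
    (htrans_neg : ∀ n : ℤ, n ≤ -1 → ∀ x ∈ grading n,
      (∀ y ∈ grading 1, ⁅x, y⁆ = 0) → x = 0)
    (h_neg : (J : Submodule R L) ⊓ grading (-1) = ⊥) :
    ∀ n, n ≤ -1 → (J : Submodule R L) ⊓ grading n = ⊥ :=
  Int.leInductionDown h_neg fun n hn ih ↦
    J.inf_eq_bot_of_inf_eq_bot_of_lie_mem
      (fun x hx y hy ↦ by simpa using bracket_grading _ _ x y hx hy)
      (htrans_neg (n - 1) (by omega)) ih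

end LieIdeal

theorem gradedIdeal_trivial_of_transitive_general
    {L : Type*} [LieRing L] [LieAlgebra ℂ L]
    (grading : ℤ → Submodule ℂ L)
    (bracket_grading : ∀ (i j : ℤ) (x y : L),
      x ∈ grading i → y ∈ grading j → ⁅x, y⁆ ∈ grading (i + j))
    (htrans_pos : ∀ n : ℤ, 1 ≤ n → ∀ x ∈ grading n,
      (∀ y ∈ grading (-1), ⁅x, y⁆ = 0) → x = 0)
    (htrans_neg : ∀ n : ℤ, n ≤ -1 → ∀ x ∈ grading n,
      (∀ y ∈ grading 1, ⁅x, y⁆ = 0) → x = 0)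
    (J : LieIdeal ℂ L)
    (hJgraded : (J : Submodule ℂ L) = ⨆ n : ℤ, (J : Submodule ℂ L) ⊓ grading n)
    (hJlocal : (J : Submodule ℂ L) ⊓ (grading (-1) ⊔ grading 0 ⊔ grading 1) = ⊥) :
    J = ⊥ := by
  have hlocal {n : ℤ} (hn : grading n ≤ grading (-1) ⊔ grading 0 ⊔ grading 1) :
      (J : Submodule ℂ L) ⊓ grading n = ⊥ :=
    eq_bot_mono (inf_le_inf_left _ hn) hJlocal
  have h_neg := hlocal (le_sup_left.trans le_sup_left)
  have h_zero := hlocal (le_sup_right.trans le_sup_left)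
  have h_one := hlocal le_sup_right
  have hall (n : ℤ) : (J : Submodule ℂ L) ⊓ grading n = ⊥ := by
    rcases le_or_gt 1 n with hn | hn
    · exact J.inf_grading_eq_bot_of_one_le bracket_grading htrans_pos h_one n hn
    rcases le_or_gt n (-1) with hn' | hn'
    · exact J.inf_grading_eq_bot_of_le_neg_one bracket_grading htrans_neg h_neg n hn'
    · rwa [show n = 0 by omega]
  rw [← LieSubmodule.toSubmodule_eq_bot, ← LieIdeal.toLieSubalgebra_toSubmodule, hJgraded]
  exact iSup_eq_bot.mpr hall

/-- Let `L` be a `ℤ`-graded Lie algebra over `ℂ` (internal direct sum of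
subspaces `grading n` with `⁅L_i, L_j⁆ ⊆ L_{i+j}`) whose grading is transitive: a nonzero
element of `L_n` with `n ≥ 1` does not commute with all of `L_{-1}`, and a nonzero element
of `L_n` with `n ≤ -1` does not commute with all of `L_1`.  Then every graded ideal `J`
(i.e. `J = ⊕ₙ (J ∩ Lₙ)`) intersecting the local part `L_{-1} ⊕ L_0 ⊕ L_1` trivially is
the zero ideal; in other words, `L` is minimal in Kac's sense. -/
theorem gradedIdeal_trivial_of_transitive
    {L : Type*} [LieRing L] [LieAlgebra ℂ L]
    (grading : ℤ → Submodule ℂ L)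
    (internal : DirectSum.IsInternal grading)
    (bracket_grading : ∀ (i j : ℤ) (x y : L),
      x ∈ grading i → y ∈ grading j → ⁅x, y⁆ ∈ grading (i + j))
    (htrans_pos : ∀ n : ℤ, 1 ≤ n → ∀ x ∈ grading n,
      (∀ y ∈ grading (-1), ⁅x, y⁆ = 0) → x = 0)
    (htrans_neg : ∀ n : ℤ, n ≤ -1 → ∀ x ∈ grading n,
      (∀ y ∈ grading 1, ⁅x, y⁆ = 0) → x = 0)
    (J : LieIdeal ℂ L)
    (hJgraded : (J : Submodule ℂ L) = ⨆ n : ℤ, (J : Submodule ℂ L) ⊓ grading n)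
    (hJlocal : (J : Submodule ℂ L) ⊓ (grading (-1) ⊔ grading 0 ⊔ grading 1) = ⊥) :
    J = ⊥ :=
  gradedIdeal_trivial_of_transitive_general grading bracket_grading htrans_pos htrans_neg J hJgraded
    hJlocal
end

section
/- Fix an integer n ≥ 2 and let Jₙ = [[Oₙ, Iₙ], [−Iₙ, Oₙ]] ∈ M(2n,2n;ℂ). Let X ∈ M(2n,3;ℂ) have row 1 = (1,0,0), row 2 = (0,1,0), row n+1 = (0,0,1) and all other rows zero, and let η ∈ M(2n,3;ℂ) have row 1 = (0,0,−1), row n+1 = (1,0,0) and all other rows zero. Then Tr(ᵀX Jₙ η) = 2, X ᵀη + η ᵀX = O_{2n}, and ᵀX Jₙ η + ᵀη Jₙ X = O₃. Consequently Φ(X ⊗ η) = (2, O_{2n}, O₃) = H₀, so that (η, H₀, X) is an sl₂-triple of the graded Lie algebra associated to the pentad, where H₀ = (2, O_{2n}, O₃) is the grading element. -/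
open Matrix

/-- The matrix `Jₙ = [[Oₙ, Iₙ], [−Iₙ, Oₙ]] ∈ M(2n, 2n; ℂ)`, with `M(2n, 2n; ℂ)` realised
as matrices indexed by `Fin n ⊕ Fin n`. -/
noncomputable def Jmat (n : ℕ) : Matrix (Fin n ⊕ Fin n) (Fin n ⊕ Fin n) ℂ :=
  Matrix.fromBlocks 0 1 (-1) 0

/-- The generic point `X ∈ M(2n, 3; ℂ)`: row `1` is `(1,0,0)`, row `2` is `(0,1,0)`,
row `n+1` is `(0,0,1)` and all other rows are zero.  (Rows `1, …, n` are indexed by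
`Sum.inl`, rows `n+1, …, 2n` by `Sum.inr`.) -/
noncomputable def Xmat (n : ℕ) (hn : 2 ≤ n) : Matrix (Fin n ⊕ Fin n) (Fin 3) ℂ :=
  Matrix.of fun i j =>
    if (i = Sum.inl ⟨0, by omega⟩ ∧ j = 0) ∨ (i = Sum.inl ⟨1, by omega⟩ ∧ j = 1)
        ∨ (i = Sum.inr ⟨0, by omega⟩ ∧ j = 2) then 1 else 0

/-- The matrix `η ∈ M(2n, 3; ℂ)`: row `1` is `(0,0,−1)`, row `n+1` is `(1,0,0)` and all
other rows are zero. -/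
noncomputable def etaMat (n : ℕ) (hn : 2 ≤ n) : Matrix (Fin n ⊕ Fin n) (Fin 3) ℂ :=
  Matrix.of fun i j =>
    if i = Sum.inl ⟨0, by omega⟩ ∧ j = 2 then -1
    else if i = Sum.inr ⟨0, by omega⟩ ∧ j = 0 then 1 else 0

/-!
In matrix units, `Jₙ η = E_{n+1,3} + E_{1,1}`, so `ᵀX Jₙ η = E₁₁ + E₃₃` has trace 2, and
`X ᵀη = E_{1,n+1} − E_{n+1,1}`. The two remaining products are transposes of these:
`η ᵀX = ᵀ(X ᵀη)` and, as `ᵀJₙ = −Jₙ`, `ᵀη Jₙ X = −ᵀ(ᵀX Jₙ η)`. Hence both sums vanish, because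
`ᵀX Jₙ η` is symmetric and `X ᵀη` is antisymmetric.
-/

section Jmat

variable {o : Type*} {n : ℕ}

lemma Jmat_transpose : (Jmat n)ᵀ = -Jmat n := by
  simp [Jmat, fromBlocks_transpose, fromBlocks_neg]

lemma Jmat_mul_apply_inl (M : Matrix (Fin n ⊕ Fin n) o ℂ) (i : Fin n) (k : o) :
    (Jmat n * M) (.inl i) k = M (.inr i) k := by
  simp [Jmat, mul_apply, one_apply]

lemma Jmat_mul_apply_inr (M : Matrix (Fin n ⊕ Fin n) o ℂ) (i : Fin n) (k : o) :
    (Jmat n * M) (.inr i) k = -M (.inl i) k := by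
  simp [Jmat, mul_apply, one_apply]

lemma transpose_mul_Jmat_mul_eq_neg_transpose {p : Type*} (u : Matrix (Fin n ⊕ Fin n) o ℂ)
    (v : Matrix (Fin n ⊕ Fin n) p ℂ) : vᵀ * Jmat n * u = -(uᵀ * Jmat n * v)ᵀ := by
  simp [transpose_mul, Jmat_transpose, Matrix.mul_assoc]

variable [DecidableEq o]

-- Without the ascriptions the row type of `single` is not known when `*` is elaborated, and the
-- product is resolved through the `CStarMatrix` instance instead of the `Matrix` one.
lemma Jmat_mul_single_inl (a : Fin n) (j : o) (c : ℂ) :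
    Jmat n * single (.inl a : Fin n ⊕ Fin n) j c = single (.inr a : Fin n ⊕ Fin n) j (-c) := by
  ext (i | i) k <;> simp [Jmat_mul_apply_inl, Jmat_mul_apply_inr, single_apply, neg_ite]

lemma Jmat_mul_single_inr (a : Fin n) (j : o) (c : ℂ) :
    Jmat n * single (.inr a : Fin n ⊕ Fin n) j c = single (.inl a : Fin n ⊕ Fin n) j c := by
  ext (i | i) k <;> simp [Jmat_mul_apply_inl, Jmat_mul_apply_inr, single_apply]

end Jmat

section GenericPoint

variable (n : ℕ) (hn : 2 ≤ n)

lemma Xmat_eq_sum_single : Xmat n hn =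
    single (.inl ⟨0, by omega⟩) 0 1 + single (.inl ⟨1, by omega⟩) 1 1
      + single (.inr ⟨0, by omega⟩) 2 1 := by
  ext i j
  simp only [Xmat, of_apply, Matrix.add_apply, single_apply]
  split_ifs <;> grind

lemma etaMat_eq_sum_single : etaMat n hn =
    single (.inl ⟨0, by omega⟩) 2 (-1) + single (.inr ⟨0, by omega⟩) 0 1 := by
  ext i j
  simp only [etaMat, of_apply, Matrix.add_apply, single_apply]
  split_ifs <;> grind

lemma Jmat_mul_etaMat : Jmat n * etaMat n hn =
    single (.inr ⟨0, by omega⟩) 2 1 + single (.inl ⟨0, by omega⟩) 0 1 := by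
  simp [etaMat_eq_sum_single, Matrix.mul_add, Jmat_mul_single_inl, Jmat_mul_single_inr]

lemma Xmat_transpose_mul_Jmat_mul_etaMat :
    (Xmat n hn)ᵀ * Jmat n * etaMat n hn = single 0 0 1 + single 2 2 1 := by
  simp [Matrix.mul_assoc, Jmat_mul_etaMat, Xmat_eq_sum_single, Matrix.mul_add, Matrix.add_mul,
    transpose_single, add_comm]

lemma Xmat_mul_etaMat_transpose : Xmat n hn * (etaMat n hn)ᵀ =
    single (.inl ⟨0, by omega⟩) (.inr ⟨0, by omega⟩) 1
      - single (.inr ⟨0, by omega⟩) (.inl ⟨0, by omega⟩) 1 := by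
  simp [Xmat_eq_sum_single, etaMat_eq_sum_single, Matrix.mul_add, Matrix.add_mul,
    transpose_single, sub_eq_add_neg, single_neg, add_comm]

end GenericPoint

/-- Fix `n ≥ 2`.  For the matrices `X` and `η` above one has
`Tr(ᵀX Jₙ η) = 2`, `X ᵀη + η ᵀX = O_{2n}` and `ᵀX Jₙ η + ᵀη Jₙ X = O₃`.  Consequently
`Φ(X ⊗ η) = (Tr(ᵀX Jₙ η), −½(X ᵀη + η ᵀX)Jₙ, ½(ᵀX Jₙ η + ᵀη Jₙ X)) = (2, O_{2n}, O₃) = H₀`,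
so that `(η, H₀, X)` is an `sl₂`-triple of the graded Lie algebra associated to the
pentad, where `H₀ = (2, O_{2n}, O₃)` is the grading element. -/
theorem sl2_triple_of_generic_point (n : ℕ) (hn : 2 ≤ n) :
    ((Xmat n hn)ᵀ * Jmat n * etaMat n hn).trace = 2 ∧
    Xmat n hn * (etaMat n hn)ᵀ + etaMat n hn * (Xmat n hn)ᵀ = 0 ∧
    (Xmat n hn)ᵀ * Jmat n * etaMat n hn + (etaMat n hn)ᵀ * Jmat n * Xmat n hn = 0 ∧
    (-(1/2 : ℂ)) • ((Xmat n hn * (etaMat n hn)ᵀ + etaMat n hn * (Xmat n hn)ᵀ) * Jmat n)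
      = 0 ∧
    (1/2 : ℂ) • ((Xmat n hn)ᵀ * Jmat n * etaMat n hn + (etaMat n hn)ᵀ * Jmat n * Xmat n hn)
      = 0 := by
  have htrace : ((Xmat n hn)ᵀ * Jmat n * etaMat n hn).trace = 2 := by
    rw [Xmat_transpose_mul_Jmat_mul_etaMat, trace_add, trace_single_eq_same,
      trace_single_eq_same]
    norm_num
  have hsp : Xmat n hn * (etaMat n hn)ᵀ + etaMat n hn * (Xmat n hn)ᵀ = 0 := by
    rw [← transpose_transpose (etaMat n hn), ← transpose_mul, transpose_transpose,
      Xmat_mul_etaMat_transpose]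
    simp [transpose_single]
  have hso : (Xmat n hn)ᵀ * Jmat n * etaMat n hn + (etaMat n hn)ᵀ * Jmat n * Xmat n hn = 0 := by
    rw [transpose_mul_Jmat_mul_eq_neg_transpose (Xmat n hn) (etaMat n hn),
      Xmat_transpose_mul_Jmat_mul_etaMat]
    simp [transpose_single]
  exact ⟨htrace, hsp, hso, by rw [hsp]; simp, by rw [hso]; simp⟩
end

section
/- Fix an integer n ≥ 2 and let Jₙ = [[Oₙ, Iₙ], [−Iₙ, Oₙ]] ∈ M(2n,2n;ℂ). Let X ∈ M(2n,3;ℂ) have row 1 = (1,0,0), row 2 = (0,1,0), row n+1 = (0,0,1) and all other rows zero. If η ∈ M(2n,3;ℂ) satisfies Tr(ᵀX Jₙ η) = 0, X ᵀη + η ᵀX = O_{2n}, and ᵀX Jₙ η + ᵀη Jₙ X = O₃, then η = 0. In other words, the linear map η ↦ Φ(X ⊗ η) = (Tr(ᵀX Jₙ η), −½(X ᵀη + η ᵀX)Jₙ, ½(ᵀX Jₙ η + ᵀη Jₙ X)) from M(2n,3;ℂ) to gl₁ ⊕ sp_n ⊕ so₃ is injective, i.e., X is a generic point of the pentad. -/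
/-!
The columns of `X` are the standard basis vectors `e₁, e₂, e_{n+1}`, so `ᵀX X = I₃`. Multiplying
`X ᵀη + η ᵀX = 0` on the right by `X` gives `η = X M` with `M = −ᵀη X` skew-symmetric. With
`K = ᵀX Jₙ X = E₁₃ − E₃₁`, the remaining conditions become `K M = M K` and `Tr (K M) = 0`.
Commuting with `K` kills `M₁₂` and `M₂₃`, and the trace condition reads `−2 M₁₃ = 0`.
-/

open Matrix

namespace Matrix

theorem transpose_mul_mul_one_submatrix {m k R : Type*} [Fintype m] [DecidableEq m]
    [NonAssocSemiring R] (A : Matrix m m R) (s : k → m) :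
    ((1 : Matrix m m R).submatrix id s)ᵀ * A * (1 : Matrix m m R).submatrix id s =
      A.submatrix s s := by
  ext
  simp [mul_apply, one_apply]

theorem exists_eq_mul_of_mul_transpose_add_eq_zero {m k R : Type*} [Fintype m] [Fintype k]
    [DecidableEq k] [CommRing R] {X η : Matrix m k R} (hX : Xᵀ * X = 1)
    (h : X * ηᵀ + η * Xᵀ = 0) : ∃ M : Matrix k k R, η = X * M ∧ Mᵀ = -M := by
  have hη : η = X * -(ηᵀ * X) :=
    calc η = η * Xᵀ * X := by rw [Matrix.mul_assoc, hX, Matrix.mul_one]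
      _ = X * -(ηᵀ * X) := by
        rw [eq_neg_of_add_eq_zero_right h, Matrix.neg_mul, Matrix.mul_neg, Matrix.mul_assoc]
  have hM : Xᵀ * η = -(ηᵀ * X) := by
    conv_lhs => rw [hη]
    rw [← Matrix.mul_assoc, hX, Matrix.one_mul]
  exact ⟨-(ηᵀ * X), hη, by rw [transpose_neg, transpose_mul, transpose_transpose, hM]⟩

theorem eq_zero_of_transpose_eq_neg_of_commute_of_trace_mul_eq_zero {R : Type*} [Ring R]
    [IsAddTorsionFree R] {M : Matrix (Fin 3) (Fin 3) R} (hM : Mᵀ = -M)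
    (hc : Commute !![0, 0, 1; 0, 0, 0; -1, 0, 0] M)
    (htr : trace (!![0, 0, 1; 0, 0, 0; -1, 0, 0] * M) = 0) : M = 0 := by
  have skew (i j : Fin 3) : M j i = -M i j := congr_fun₂ hM i j
  have diag (i : Fin 3) : M i i = 0 := self_eq_neg.mp (skew i i)
  have h01 : M 0 1 = 0 := by
    simpa [mul_apply, Fin.sum_univ_three] using congr_fun₂ hc 2 1
  have h21 : M 2 1 = 0 := by
    simpa [mul_apply, Fin.sum_univ_three] using congr_fun₂ hc 0 1
  have h02 : M 0 2 = 0 := by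
    have h : M 2 0 - M 0 2 = 0 := by
      simpa [trace_fin_three, vecMul, dotProduct, Fin.sum_univ_three, sub_eq_add_neg] using htr
    rwa [skew 0 2, sub_eq_zero, neg_eq_self] at h
  ext i j
  fin_cases i <;> fin_cases j <;> simp [diag, h01, h21, h02, skew 0 1, skew 2 1, skew 0 2]

end Matrix

def xRows (n : ℕ) (hn : 2 ≤ n) : Fin 3 → Fin n ⊕ Fin n :=
  ![Sum.inl ⟨0, by omega⟩, Sum.inl ⟨1, by omega⟩, Sum.inr ⟨0, by omega⟩]

theorem xRows_injective (n : ℕ) (hn : 2 ≤ n) : Function.Injective (xRows n hn) := by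
  intro a b
  fin_cases a <;> fin_cases b <;> simp [xRows]

theorem Xmat_eq_one_submatrix (n : ℕ) (hn : 2 ≤ n) :
    Xmat n hn = (1 : Matrix _ _ ℂ).submatrix id (xRows n hn) := by
  ext i j
  fin_cases j <;> simp [Xmat, xRows, one_apply, eq_comm] <;> congr

theorem Jmat_submatrix_xRows (n : ℕ) (hn : 2 ≤ n) :
    (Jmat n).submatrix (xRows n hn) (xRows n hn) = !![0, 0, 1; 0, 0, 0; -1, 0, 0] := by
  ext a b
  fin_cases a <;> fin_cases b <;> simp [xRows, Jmat, one_apply]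

/-- Fix `n ≥ 2` and let `X` be as above.  If `η ∈ M(2n, 3; ℂ)`
satisfies `Tr(ᵀX Jₙ η) = 0`, `X ᵀη + η ᵀX = O_{2n}` and `ᵀX Jₙ η + ᵀη Jₙ X = O₃`, then
`η = 0`.  In other words, the linear map
`η ↦ Φ(X ⊗ η) = (Tr(ᵀX Jₙ η), −½(X ᵀη + η ᵀX)Jₙ, ½(ᵀX Jₙ η + ᵀη Jₙ X))` from
`M(2n, 3; ℂ)` to `gl₁ ⊕ sp_n ⊕ so₃` is injective, i.e. `X` is a generic point of the
pentad. -/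
theorem generic_point_injective
    (n : ℕ) (hn : 2 ≤ n) (η : Matrix (Fin n ⊕ Fin n) (Fin 3) ℂ)
    (h₁ : ((Xmat n hn)ᵀ * Jmat n * η).trace = 0)
    (h₂ : Xmat n hn * ηᵀ + η * (Xmat n hn)ᵀ = 0)
    (h₃ : (Xmat n hn)ᵀ * Jmat n * η + ηᵀ * Jmat n * Xmat n hn = 0) :
    η = 0 := by
  set X := Xmat n hn with hX
  have hXX : Xᵀ * X = 1 := by
    rw [← Matrix.mul_one Xᵀ, hX, Xmat_eq_one_submatrix, transpose_mul_mul_one_submatrix,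
      submatrix_one _ (xRows_injective n hn)]
  have hK : Xᵀ * Jmat n * X = !![0, 0, 1; 0, 0, 0; -1, 0, 0] := by
    rw [hX, Xmat_eq_one_submatrix, transpose_mul_mul_one_submatrix, Jmat_submatrix_xRows]
  obtain ⟨M, rfl, hM⟩ := exists_eq_mul_of_mul_transpose_add_eq_zero hXX h₂
  have hKM : Xᵀ * Jmat n * (X * M) = !![0, 0, 1; 0, 0, 0; -1, 0, 0] * M := by
    rw [← Matrix.mul_assoc, hK]
  have hMK : (X * M)ᵀ * Jmat n * X = -(M * !![0, 0, 1; 0, 0, 0; -1, 0, 0]) := by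
    rw [transpose_mul, hM, Matrix.mul_assoc, Matrix.mul_assoc, ← Matrix.mul_assoc Xᵀ, hK,
      Matrix.neg_mul]
  rw [hKM, hMK, ← sub_eq_add_neg, sub_eq_zero] at h₃
  rw [hKM] at h₁
  rw [eq_zero_of_transpose_eq_neg_of_commute_of_trace_mul_eq_zero hM h₃ h₁, Matrix.mul_zero]
end
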